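/- arXiv:1701.08537 — 2 statements merged into one kernel-verified Lean document; each statement's English description precedes it below -/
import Mathlib

section
/- Let V be an n-dimensional vector space over the finite field F_q with n ≥ 3 and q ≥ 3. Then no identifying code exists for Γ(V); that is, no subset of vertices of Γ(V) is an identifying code. -/
/-- A set `L` is a locating-dominating set of `G` if for every two distinct
vertices `u, v ∉ L` we have `∅ ≠ N(u) ∩ L ≠ N(v) ∩ L ≠ ∅`. -/
def IsLocDom {α : Type*} (G : SimpleGraph α) (L : Set α) : Prop :=
  ∀ ⦃u v : α⦄, u ∉ L → v ∉ L → u ≠ v →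
    G.neighborSet u ∩ L ≠ ∅ ∧
    G.neighborSet u ∩ L ≠ G.neighborSet v ∩ L ∧
    G.neighborSet v ∩ L ≠ ∅

/-- A set `C` is an identifying code of `G` if `N[u] ∩ C ≠ N[v] ∩ C`
for all distinct vertices `u, v`. -/
def IsIdCode {α : Type*} (G : SimpleGraph α) (C : Set α) : Prop :=
  ∀ ⦃u v : α⦄, u ≠ v →
    insert u (G.neighborSet u) ∩ C ≠ insert v (G.neighborSet v) ∩ C

/-- The location-domination number: minimum cardinality of a locating-dominating set. -/
noncomputable def locDomNum {α : Type*} (G : SimpleGraph α) : ℕ :=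
  sInf {k : ℕ | ∃ L : Set α, IsLocDom G L ∧ L.ncard = k}

/-- The identifying number: minimum cardinality of an identifying code. -/
noncomputable def idNum {α : Type*} (G : SimpleGraph α) : ℕ :=
  sInf {k : ℕ | ∃ C : Set α, IsIdCode G C ∧ C.ncard = k}
/-- The non-zero component graph of a vector space `W` with respect to a fixed
basis `b`: vertices are the non-zero vectors, and two distinct vertices are
adjacent iff some basis vector has non-zero coefficient in both of their
representations. -/
def nzcGraph {F W : Type*} [Field F] [AddCommGroup W] [Module F W] {n : ℕ}
    (b : Module.Basis (Fin n) F W) : SimpleGraph {w : W // w ≠ 0} where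
  Adj u v := u ≠ v ∧ ∃ i, b.repr u.1 i ≠ 0 ∧ b.repr v.1 i ≠ 0
  symm := by
    refine ⟨?_⟩
    rintro u v ⟨h, i, hu, hv⟩
    exact ⟨h.symm, i, hv, hu⟩
  loopless := by
    refine ⟨?_⟩
    rintro u ⟨h, -⟩
    exact h rfl

/-- `Tset b i` is the class `Tᵢ` of non-zero vectors having exactly `i`
non-zero coefficients in their representation w.r.t. the basis `b`. -/
def Tset {F W : Type*} [Field F] [AddCommGroup W] [Module F W] {n : ℕ}
    (b : Module.Basis (Fin n) F W) (i : ℕ) : Set {w : W // w ≠ 0} :=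
  {v | (b.repr v.1).support.card = i}

/-!
Over a field with at least three elements, pick a scalar `c ∉ {0, 1}`. A vertex `u` of `Γ(V)` is
adjacent to exactly the vertices sharing a support coordinate with it, so its closed
neighbourhood only depends on the support of `u`. Hence `u` and `c • u` are distinct vertices
with the same closed neighbourhood, and no set of vertices can separate them.
-/

theorem not_isIdCode_of_closedNbhd_eq {α : Type*} {G : SimpleGraph α} {u v : α} (huv : u ≠ v)
    (h : insert u (G.neighborSet u) = insert v (G.neighborSet v)) (C : Set α) :
    ¬ IsIdCode G C :=
  fun hC => hC huv (by rw [h])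

theorem Fintype.exists_ne_ne_of_three_le_card {α : Type*} [Fintype α]
    (h : 3 ≤ Fintype.card α) (a b : α) : ∃ c, c ≠ a ∧ c ≠ b := by
  classical
  have hlt : ({a, b} : Finset α).card < (Finset.univ : Finset α).card :=
    (Finset.card_le_two).trans_lt (by rw [Finset.card_univ]; omega)
  obtain ⟨c, -, hc⟩ := Finset.exists_mem_notMem_of_card_lt_card hlt
  simp only [Finset.mem_insert, Finset.mem_singleton, not_or] at hc
  exact ⟨c, hc⟩

section nzcGraph

variable {F W : Type*} [Field F] [AddCommGroup W] [Module F W] {n : ℕ}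
  (b : Module.Basis (Fin n) F W)

theorem exists_repr_ne_zero (u : {w : W // w ≠ 0}) : ∃ i, b.repr u.1 i ≠ 0 := by
  by_contra! h
  exact u.2 (b.repr.map_eq_zero_iff.mp (Finsupp.ext h))

theorem mem_insert_neighborSet_nzcGraph (u x : {w : W // w ≠ 0}) :
    x ∈ insert u ((nzcGraph b).neighborSet u) ↔ ∃ i, b.repr u.1 i ≠ 0 ∧ b.repr x.1 i ≠ 0 := by
  refine ⟨?_, fun hx => ?_⟩
  · rintro (rfl | ⟨-, hshared⟩)
    · obtain ⟨i, hi⟩ := exists_repr_ne_zero b x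
      exact ⟨i, hi, hi⟩
    · exact hshared
  · rcases eq_or_ne x u with rfl | hne
    · exact Set.mem_insert _ _
    · exact Set.mem_insert_of_mem _ ⟨hne.symm, hx⟩

theorem nzcGraph_closedNbhd_eq_of_support_eq {u v : {w : W // w ≠ 0}}
    (h : (b.repr u.1).support = (b.repr v.1).support) :
    insert u ((nzcGraph b).neighborSet u) = insert v ((nzcGraph b).neighborSet v) := by
  ext x
  simp only [mem_insert_neighborSet_nzcGraph, ← Finsupp.mem_support_iff, h]

theorem not_isIdCode_nzcGraph_of_ne_zero_of_ne_one {c : F} (hc0 : c ≠ 0) (hc1 : c ≠ 1)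
    (u : {w : W // w ≠ 0}) (C : Set {w : W // w ≠ 0}) : ¬ IsIdCode (nzcGraph b) C := by
  let v : {w : W // w ≠ 0} := ⟨c • u.1, smul_ne_zero hc0 u.2⟩
  have huv : u ≠ v := by
    intro h
    have hcu : (1 - c) • u.1 = 0 := by
      rw [sub_smul, one_smul, sub_eq_zero]
      exact congrArg Subtype.val h
    exact u.2 ((smul_eq_zero.mp hcu).resolve_left (sub_ne_zero.mpr hc1.symm))
  refine not_isIdCode_of_closedNbhd_eq huv (nzcGraph_closedNbhd_eq_of_support_eq b ?_) C
  simp only [v, map_smul, Finsupp.support_smul_eq hc0]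

end nzcGraph

/-- For `n ≥ 3` and `q ≥ 3`, no subset of vertices of `Γ(V)` is an identifying code. -/
theorem stmt_16 {F W : Type*} [Field F] [Fintype F] (hq : 3 ≤ Fintype.card F)
    [AddCommGroup W] [Module F W] {n : ℕ} (hn : 3 ≤ n) (b : Module.Basis (Fin n) F W) :
    ∀ C : Set {w : W // w ≠ 0}, ¬ IsIdCode (nzcGraph b) C := by
  obtain ⟨c, hc0, hc1⟩ := Fintype.exists_ne_ne_of_three_le_card hq (0 : F) 1
  let i : Fin n := ⟨0, by omega⟩
  exact not_isIdCode_nzcGraph_of_ne_zero_of_ne_one b hc0 hc1 ⟨b i, b.ne_zero i⟩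
end

section
/- Let V be an n-dimensional vector space over the finite field F_q with q ≥ 3 elements. Then the exchange property holds for locating-dominating sets in Γ(V): whenever L_{D1} and L_{D2} are minimal locating-dominating sets of Γ(V) and u_1 ∈ L_{D1}, there exists u_2 ∈ L_{D2} such that (L_{D2} \ {u_2}) ∪ {u_1} is also a minimal locating-dominating set of Γ(V). -/
/-- A locating-dominating set is minimal if no proper subset of it is
a locating-dominating set. -/
def IsMinLocDom {α : Type*} (G : SimpleGraph α) (L : Set α) : Prop :=
  IsLocDom G L ∧ ∀ L' : Set α, L' ⊂ L → ¬ IsLocDom G L'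

/-- The exchange property for locating-dominating sets. -/
def ExchangePropertyLD {α : Type*} (G : SimpleGraph α) : Prop :=
  ∀ L₁ L₂ : Set α, IsMinLocDom G L₁ → IsMinLocDom G L₂ →
    ∀ u₁ ∈ L₁, ∃ u₂ ∈ L₂, IsMinLocDom G ((L₂ \ {u₂}) ∪ {u₁})
section ExchangeAux
variable {F W : Type*} [Field F] [AddCommGroup W] [Module F W] {n : ℕ} (b : Module.Basis (Fin n) F W)

/-- The support of a nonzero vector w.r.t. the basis `b`. -/
noncomputable def supp' (v : {w : W // w ≠ 0}) : Finset (Fin n) := (b.repr v.1).support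

lemma supp'_nonempty (v : {w : W // w ≠ 0}) : (supp' b v).Nonempty := by
  rw [supp', Finsupp.support_nonempty_iff]
  intro h
  exact v.2 (by simpa using (LinearEquiv.map_eq_zero_iff b.repr).mp h)

lemma nzc_adj_iff {u v : {w : W // w ≠ 0}} :
    (nzcGraph b).Adj u v ↔ u ≠ v ∧ ∃ i, i ∈ supp' b u ∧ i ∈ supp' b v := by
  simp [nzcGraph, supp', Finsupp.mem_support_iff]

lemma exists_supp'_eq (S : Finset (Fin n)) (hS : S.Nonempty) :
    ∃ v : {w : W // w ≠ 0}, supp' b v = S := by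
  classical
  set f : Fin n →₀ F := ∑ i ∈ S, Finsupp.single i 1 with hf
  have hfj : ∀ j, f j = if j ∈ S then 1 else 0 := by
    intro j
    rw [hf, Finsupp.finset_sum_apply]
    simp [Finsupp.single_apply]
  have hsupp : f.support = S := by
    ext j
    rw [Finsupp.mem_support_iff, hfj]
    split <;> simp_all
  have hf0 : f ≠ 0 := by
    obtain ⟨i, hi⟩ := hS
    intro h
    have := hfj i
    rw [h] at this
    simp [hi] at this
  refine ⟨⟨b.repr.symm f, ?_⟩, ?_⟩
  · intro h
    exact hf0 (by simpa [h] using (LinearEquiv.apply_symm_apply b.repr f).symm)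
  · show (b.repr (b.repr.symm f)).support = S
    rw [LinearEquiv.apply_symm_apply]
    exact hsupp

lemma exists_ne_supp'_eq [Fintype F] (hq : 3 ≤ Fintype.card F) (v : {w : W // w ≠ 0}) :
    ∃ v', v' ≠ v ∧ supp' b v' = supp' b v := by
  classical
  obtain ⟨c, hc0, hc1⟩ : ∃ c : F, c ≠ 0 ∧ c ≠ 1 := by
    by_contra h
    push_neg at h
    have hsub : (Finset.univ : Finset F) ⊆ {0, 1} := by
      intro c _
      by_cases hc : c = 0
      · simp [hc]
      · simp [h c hc]
    have h2 := Finset.card_le_card hsub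
    have h3 : ({0, 1} : Finset F).card ≤ 2 := Finset.card_insert_le _ _ |>.trans (by simp)
    rw [Finset.card_univ] at h2
    omega
  refine ⟨⟨c • v.1, smul_ne_zero hc0 v.2⟩, ?_, ?_⟩
  · intro h
    have h' : c • v.1 = v.1 := congrArg Subtype.val h
    have : (c - 1) • v.1 = 0 := by rw [sub_smul, h', one_smul, sub_self]
    rcases smul_eq_zero.mp this with h1 | h1
    · exact hc1 (sub_eq_zero.mp h1)
    · exact v.2 h1
  · show (b.repr (c • v.1)).support = _
    rw [map_smul, Finsupp.support_smul_eq hc0]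
    rfl

/-- Vertices with the same support and both outside `L` have the same `L`-neighborhood. -/
lemma nbhd_inter_eq {L : Set {w : W // w ≠ 0}} {u v : {w : W // w ≠ 0}}
    (hs : supp' b u = supp' b v) (hu : u ∉ L) (hv : v ∉ L) :
    (nzcGraph b).neighborSet u ∩ L = (nzcGraph b).neighborSet v ∩ L := by
  ext w
  simp only [Set.mem_inter_iff, SimpleGraph.mem_neighborSet, nzc_adj_iff]
  constructor
  · rintro ⟨⟨-, i, hiu, hiw⟩, hwL⟩
    exact ⟨⟨fun h => hv (h ▸ hwL), i, hs ▸ hiu, hiw⟩, hwL⟩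
  · rintro ⟨⟨-, i, hiv, hiw⟩, hwL⟩
    exact ⟨⟨fun h => hu (h ▸ hwL), i, hs ▸ hiv, hiw⟩, hwL⟩

/-- Core criterion: a set meeting every support class, and missing at most one
vertex per class, is locating-dominating. -/
lemma isLocDom_of_aux (L : Set {w : W // w ≠ 0})
    (hstar : ∀ S : Finset (Fin n), S.Nonempty → ∃ w ∈ L, supp' b w = S)
    (hinj : ∀ u v : {w : W // w ≠ 0}, u ∉ L → v ∉ L → supp' b u = supp' b v → u = v) :
    IsLocDom (nzcGraph b) L := by
  have hne : ∀ x, x ∉ L → (nzcGraph b).neighborSet x ∩ L ≠ ∅ := by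
    intro x hx
    obtain ⟨i, hi⟩ := supp'_nonempty b x
    obtain ⟨w, hwL, hws⟩ := hstar {i} ⟨i, Finset.mem_singleton_self i⟩
    rw [← Set.nonempty_iff_ne_empty]
    refine ⟨w, (nzc_adj_iff b).mpr ⟨fun h => hx (h ▸ hwL), i, hi, ?_⟩, hwL⟩
    rw [hws]
    exact Finset.mem_singleton_self i
  have key : ∀ u' v' : {w : W // w ≠ 0}, u' ∉ L → v' ∉ L →
      ∀ i, i ∈ supp' b u' → i ∉ supp' b v' →
      (nzcGraph b).neighborSet u' ∩ L ≠ (nzcGraph b).neighborSet v' ∩ L := by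
    intro u' v' hu' hv' i hiu hiv heq
    obtain ⟨w, hwL, hws⟩ := hstar {i} ⟨i, Finset.mem_singleton_self i⟩
    have hwu : w ∈ (nzcGraph b).neighborSet u' ∩ L := by
      refine ⟨(nzc_adj_iff b).mpr ⟨fun h => hu' (h ▸ hwL), i, hiu, ?_⟩, hwL⟩
      rw [hws]; exact Finset.mem_singleton_self i
    rw [heq] at hwu
    obtain ⟨hadj, -⟩ := hwu
    obtain ⟨-, j, hjv, hjw⟩ := (nzc_adj_iff b).mp hadj
    rw [hws, Finset.mem_singleton] at hjw
    exact hiv (hjw ▸ hjv)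
  intro u v hu hv huv
  have hsuv : supp' b u ≠ supp' b v := fun h => huv (hinj u v hu hv h)
  have hex : ∃ i, (i ∈ supp' b u ∧ i ∉ supp' b v) ∨ (i ∈ supp' b v ∧ i ∉ supp' b u) := by
    by_contra hc
    push_neg at hc
    exact hsuv (Finset.ext fun i => ⟨fun h => (hc i).1 h, fun h => (hc i).2 h⟩)
  refine ⟨hne u hu, ?_, hne v hv⟩
  obtain ⟨i, ⟨h1, h2⟩ | ⟨h1, h2⟩⟩ := hex
  · exact key u v hu hv i h1 h2
  · exact (key v u hv hu i h1 h2).symm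

/-- `T` is a transversal: it contains exactly one vertex of each support class. -/
def IsTransv (T : Set {w : W // w ≠ 0}) : Prop :=
  (∀ v, ∃ t ∈ T, supp' b t = supp' b v) ∧
  ∀ t₁ ∈ T, ∀ t₂ ∈ T, supp' b t₁ = supp' b t₂ → t₁ = t₂

lemma minLocDom_of_transv [Fintype F] (hq : 3 ≤ Fintype.card F)
    (L : Set {w : W // w ≠ 0}) (h : IsTransv b Lᶜ) : IsMinLocDom (nzcGraph b) L := by
  obtain ⟨hsurj, hinj⟩ := h
  constructor
  · apply isLocDom_of_aux
    · intro S hS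
      obtain ⟨y, hy⟩ := exists_supp'_eq b S hS
      obtain ⟨y', hy'ne, hy's⟩ := exists_ne_supp'_eq b hq y
      by_cases hyL : y ∈ L
      · exact ⟨y, hyL, hy⟩
      by_cases hy'L : y' ∈ L
      · exact ⟨y', hy'L, hy's.trans hy⟩
      · exact absurd (hinj y' hy'L y hyL hy's) hy'ne
    · intro u v hu hv hs
      exact hinj u hu v hv hs
  · intro L' hL' hLD'
    obtain ⟨x, hxL, hxL'⟩ := Set.exists_of_ssubset hL'
    obtain ⟨t, htc, hts⟩ := hsurj x
    have htx : t ≠ x := fun h => htc (h ▸ hxL)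
    have htL' : t ∉ L' := fun h => htc (hL'.1 h)
    exact (hLD' hxL' htL' htx.symm).2.1 (nbhd_inter_eq b hts.symm hxL' htL')

lemma transv_of_minLocDom [Fintype F] (hq : 3 ≤ Fintype.card F)
    (L : Set {w : W // w ≠ 0}) (h : IsMinLocDom (nzcGraph b) L) : IsTransv b Lᶜ := by
  obtain ⟨hLD, hmin⟩ := h
  have hinj : ∀ t₁ ∈ Lᶜ, ∀ t₂ ∈ Lᶜ, supp' b t₁ = supp' b t₂ → t₁ = t₂ := by
    intro t₁ h₁ t₂ h₂ hs
    by_contra hne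
    exact (hLD h₁ h₂ hne).2.1 (nbhd_inter_eq b hs h₁ h₂)
  refine ⟨?_, hinj⟩
  intro v
  by_contra hno
  push_neg at hno
  have hclass : ∀ t, supp' b t = supp' b v → t ∈ L := by
    intro t ht
    by_contra hc
    exact hno t hc ht
  have hvL : v ∈ L := hclass v rfl
  have hss : L \ {v} ⊂ L := Set.sdiff_singleton_ssubset.mpr hvL
  refine hmin (L \ {v}) hss (isLocDom_of_aux b _ ?_ ?_)
  · intro S hS
    obtain ⟨y, hy⟩ := exists_supp'_eq b S hS
    obtain ⟨y', hy'ne, hy's⟩ := exists_ne_supp'_eq b hq y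
    by_cases hSv : S = supp' b v
    · rcases eq_or_ne y v with rfl | hyv
      · exact ⟨y', ⟨hclass y' (by rw [hy's, hy, hSv]), by simpa using hy'ne⟩, hy's.trans hy⟩
      · exact ⟨y, ⟨hclass y (hy.trans hSv), by simpa using hyv⟩, hy⟩
    · have hyv : y ≠ v := fun h => hSv (by rw [← hy, h])
      have hy'v : y' ≠ v := fun h => hSv (by rw [← hy, ← hy's, h])
      by_cases hyL : y ∈ L
      · exact ⟨y, ⟨hyL, by simpa using hyv⟩, hy⟩
      by_cases hy'L : y' ∈ L
      · exact ⟨y', ⟨hy'L, by simpa using hy'v⟩, hy's.trans hy⟩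
      · exact absurd (hinj y' hy'L y hyL hy's) hy'ne
  · intro u w hu hw hs
    have hu' : u ∉ L ∨ u = v := by
      by_cases h : u = v
      · exact Or.inr h
      · exact Or.inl fun hL => hu ⟨hL, by simpa using h⟩
    have hw' : w ∉ L ∨ w = v := by
      by_cases h : w = v
      · exact Or.inr h
      · exact Or.inl fun hL => hw ⟨hL, by simpa using h⟩
    rcases hu' with hu' | rfl
    · rcases hw' with hw' | rfl
      · exact hinj u hu' w hw' hs
      · exact absurd (hclass u hs) hu'
    · rcases hw' with hw' | rfl
      · exact absurd (hclass w hs.symm) hw'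
      · rfl
end ExchangeAux

/-- For `q ≥ 3`, the exchange property holds for locating-dominating sets in `Γ(V)`. -/
theorem stmt_19 {F W : Type*} [Field F] [Fintype F] (hq : 3 ≤ Fintype.card F)
    [AddCommGroup W] [Module F W] {n : ℕ} (b : Module.Basis (Fin n) F W) :
    ExchangePropertyLD (nzcGraph b) := by
  intro L₁ L₂ h₁ h₂ u₁ hu₁
  by_cases h : u₁ ∈ L₂
  · refine ⟨u₁, h, ?_⟩
    have heq : (L₂ \ {u₁}) ∪ {u₁} = L₂ := by
      ext x
      simp only [Set.mem_union, Set.mem_diff, Set.mem_singleton_iff]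
      constructor
      · rintro (⟨hx, -⟩ | rfl)
        · exact hx
        · exact h
      · intro hx
        by_cases hxu : x = u₁
        · exact Or.inr hxu
        · exact Or.inl ⟨hx, hxu⟩
    rw [heq]
    exact h₂
  · obtain ⟨T2surj, T2inj⟩ := transv_of_minLocDom b hq L₂ h₂
    obtain ⟨u₂, hu₂ne, hu₂s⟩ := exists_ne_supp'_eq b hq u₁
    have hu₂L : u₂ ∈ L₂ := by
      by_contra hc
      exact hu₂ne (T2inj u₂ hc u₁ h hu₂s)
    refine ⟨u₂, hu₂L, ?_⟩
    apply minLocDom_of_transv b hq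
    have hcompl : ((L₂ \ {u₂}) ∪ {u₁})ᶜ = (L₂ᶜ \ {u₁}) ∪ {u₂} := by
      ext x
      simp only [Set.mem_compl_iff, Set.mem_union, Set.mem_diff, Set.mem_singleton_iff]
      push_neg
      constructor
      · rintro ⟨hx, hxu₁⟩
        by_cases hxu₂ : x = u₂
        · exact Or.inr hxu₂
        · exact Or.inl ⟨fun hxL => hxu₂ (hx hxL), hxu₁⟩
      · rintro (⟨hx, hxu₁⟩ | rfl)
        · exact ⟨fun hmem => absurd hmem hx, hxu₁⟩
        · exact ⟨fun _ => rfl, fun hh => h (hh ▸ hu₂L)⟩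
    rw [hcompl]
    constructor
    · intro x
      obtain ⟨t, htc, hts⟩ := T2surj x
      rcases eq_or_ne t u₁ with rfl | htne
      · exact ⟨u₂, Or.inr rfl, hu₂s.trans hts⟩
      · exact ⟨t, Or.inl ⟨htc, htne⟩, hts⟩
    · intro t₁ ht₁ t₂ ht₂ hs
      rcases ht₁ with ⟨h₁c, h₁ne⟩ | h₁e
      · rcases ht₂ with ⟨h₂c, h₂ne⟩ | h₂e
        · exact T2inj t₁ h₁c t₂ h₂c hs
        · exact absurd (T2inj t₁ h₁c u₁ h (by rw [hs, h₂e, hu₂s])) h₁ne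
      · rcases ht₂ with ⟨h₂c, h₂ne⟩ | h₂e
        · exact absurd (T2inj t₂ h₂c u₁ h (by rw [hs.symm, h₁e, hu₂s])) h₂ne
        · rw [h₁e, h₂e]
end
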